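/- (General-N solutions of the boundary equations.) Let N ≥ 1 be an integer, γ₁, …, γ_N ∈ ℂ, and n a positive integer; set u := −n/2. Then: (I) with E_I := Σ_{k=1}^N (−i)^k γ_k n^k one has Φ₁(0, E_I, u) = 0 and Φ₂(n + 1, E_I, u) = 0; (II) with E_II := Σ_{k=1}^N i^k γ_k (n + 2)^k one has Φ₁(n + 1, E_II, u) = 0 and Φ₂(0, E_II, u) = 0. Consequently Φ(0, E, u) = 0 and Φ(n+1, E, u) = 0 for both (E, u) = (E_I, u) and (E, u) = (E_II, u), where Φ := Φ₁·Φ₂. -/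
import Mathlib


noncomputable section
open Complex

/-- `Φ₁(B,E,u) = (1/4)(E − Σ_{k=1}^N (2i)^k γ_k (B+u)^k)`. -/
noncomputable def Phi1 (N : ℕ) (γ : ℕ → ℂ) (B E u : ℂ) : ℂ :=
  (1/4) * (E - ∑ k ∈ Finset.Icc 1 N, (2*I)^k * γ k * (B + u)^k)

/-- `Φ₂(B,E,u) = E − Σ_{k=1}^N (−2i)^k γ_k (B+u−1)^k`. -/
noncomputable def Phi2 (N : ℕ) (γ : ℕ → ℂ) (B E u : ℂ) : ℂ :=
  E - ∑ k ∈ Finset.Icc 1 N, (-(2*I))^k * γ k * (B + u - 1)^k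

/-- `Φ = Φ₁·Φ₂`, the structure function of the generalized quantum Zernike system. -/
noncomputable def Phi (N : ℕ) (γ : ℕ → ℂ) (B E u : ℂ) : ℂ :=
  Phi1 N γ B E u * Phi2 N γ B E u

/-- general-`N` solutions of the boundary equations: with
`u = −n/2`, `E_I = Σ (−i)^k γ_k n^k` and `E_II = Σ i^k γ_k (n+2)^k` solve
`Φ(0,E,u) = 0 = Φ(n+1,E,u)`. -/
theorem generalN_boundary_solutions (N : ℕ) (hN : 1 ≤ N) (γ : ℕ → ℂ)
    (n : ℕ) (hn : 1 ≤ n) :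
    Phi1 N γ 0 (∑ k ∈ Finset.Icc 1 N, (-I)^k * γ k * (n : ℂ)^k) (-(n : ℂ)/2) = 0 ∧
    Phi2 N γ ((n : ℂ) + 1)
        (∑ k ∈ Finset.Icc 1 N, (-I)^k * γ k * (n : ℂ)^k) (-(n : ℂ)/2) = 0 ∧
    Phi1 N γ ((n : ℂ) + 1)
        (∑ k ∈ Finset.Icc 1 N, I^k * γ k * ((n : ℂ) + 2)^k) (-(n : ℂ)/2) = 0 ∧
    Phi2 N γ 0 (∑ k ∈ Finset.Icc 1 N, I^k * γ k * ((n : ℂ) + 2)^k) (-(n : ℂ)/2) = 0 ∧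
    Phi N γ 0 (∑ k ∈ Finset.Icc 1 N, (-I)^k * γ k * (n : ℂ)^k) (-(n : ℂ)/2) = 0 ∧
    Phi N γ ((n : ℂ) + 1)
        (∑ k ∈ Finset.Icc 1 N, (-I)^k * γ k * (n : ℂ)^k) (-(n : ℂ)/2) = 0 ∧
    Phi N γ 0 (∑ k ∈ Finset.Icc 1 N, I^k * γ k * ((n : ℂ) + 2)^k) (-(n : ℂ)/2) = 0 ∧
    Phi N γ ((n : ℂ) + 1)
        (∑ k ∈ Finset.Icc 1 N, I^k * γ k * ((n : ℂ) + 2)^k) (-(n : ℂ)/2) = 0 := by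

  have key : ∀ (a b : ℂ), a = b → ∀ k : ℕ, ∀ c : ℂ, a^k * c * 1 = b^k * c := by
    intro a b h k c; rw [h]; ring
  have h1 : ∀ k ∈ Finset.Icc 1 N, (-I)^k * γ k * (n : ℂ)^k
      = (2*I)^k * γ k * ((0 : ℂ) + -(n : ℂ)/2)^k := by
    intro k _
    rw [mul_right_comm, ← mul_pow, mul_right_comm, ← mul_pow]
    congr 2; ring
  have h2 : ∀ k ∈ Finset.Icc 1 N, (-I)^k * γ k * (n : ℂ)^k
      = (-(2*I))^k * γ k * ((n : ℂ) + 1 + -(n : ℂ)/2 - 1)^k := by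
    intro k _
    rw [mul_right_comm, ← mul_pow, mul_right_comm, ← mul_pow]
    congr 2; ring
  have h3 : ∀ k ∈ Finset.Icc 1 N, I^k * γ k * ((n : ℂ) + 2)^k
      = (2*I)^k * γ k * ((n : ℂ) + 1 + -(n : ℂ)/2)^k := by
    intro k _
    rw [mul_right_comm, ← mul_pow, mul_right_comm, ← mul_pow]
    congr 2; ring
  have h4 : ∀ k ∈ Finset.Icc 1 N, I^k * γ k * ((n : ℂ) + 2)^k
      = (-(2*I))^k * γ k * ((0 : ℂ) + -(n : ℂ)/2 - 1)^k := by
    intro k _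
    rw [mul_right_comm, ← mul_pow, mul_right_comm, ← mul_pow]
    congr 2; ring
  have e1 : Phi1 N γ 0 (∑ k ∈ Finset.Icc 1 N, (-I)^k * γ k * (n : ℂ)^k) (-(n : ℂ)/2) = 0 := by
    unfold Phi1
    rw [Finset.sum_congr rfl h1]
    ring
  have e2 : Phi2 N γ ((n : ℂ) + 1)
      (∑ k ∈ Finset.Icc 1 N, (-I)^k * γ k * (n : ℂ)^k) (-(n : ℂ)/2) = 0 := by
    unfold Phi2
    rw [Finset.sum_congr rfl h2]
    ring
  have e3 : Phi1 N γ ((n : ℂ) + 1)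
      (∑ k ∈ Finset.Icc 1 N, I^k * γ k * ((n : ℂ) + 2)^k) (-(n : ℂ)/2) = 0 := by
    unfold Phi1
    rw [Finset.sum_congr rfl h3]
    ring
  have e4 : Phi2 N γ 0
      (∑ k ∈ Finset.Icc 1 N, I^k * γ k * ((n : ℂ) + 2)^k) (-(n : ℂ)/2) = 0 := by
    unfold Phi2
    rw [Finset.sum_congr rfl h4]
    ring
  refine ⟨e1, e2, e3, e4, ?_, ?_, ?_, ?_⟩ <;> unfold Phi
  · rw [e1]; ring
  · rw [e2]; ring
  · rw [e4]; ring
  · rw [e3]; ring
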